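/- Let γ be a simple closed C¹ curve in ℝ² of length L with Continuous (deriv γ.curve), arc-length parametrized (‖deriv γ.curve t‖ = 1 for all t). Suppose there exist sequences a, b : ℕ → ℝ such that: (i) ∫₀^{2π} f(θ)² dθ = π·∑'_{n:ℕ+}((a n)² + (b n)²) where f is the reparametrized x-coordinate; (ii) ∫₀^{2π} (deriv f θ)² dθ = π·∑'_{n:ℕ+} n²·((a n)² + (b n)²); and (iii) n ↦ n²·((a n)² + (b n)²) is summable over ℕ+. Then the enclosed area satisfies area γ 0 L ≤ L²/(4π). -/

import Mathlib

/-- A simple closed C¹ curve in ℝⁿ, parametrized over [0, L] where L is the arc length. -/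
structure SimpleClosedC1Curve (n : ℕ) where
  curve : ℝ → EuclideanSpace ℝ (Fin n)
  length : ℝ
  length_pos : 0 < length
  continuous : Continuous curve
  has_deriv : ∀ t : ℝ, ∃ f : EuclideanSpace ℝ (Fin n), HasDerivAt curve f t
  closed : curve 0 = curve length
  periodic : ∀ t : ℝ, curve (t + length) = curve t
  simple : ∀ t s : ℝ, t ∈ Set.Ioo 0 length → s ∈ Set.Ioo 0 length →
    curve t = curve s → t = s

/-- x-coordinate of γ at s. -/
noncomputable def xCoord (γ : SimpleClosedC1Curve 2) (s : ℝ) : ℝ := γ.curve s 0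

/-- y-coordinate of γ at s. -/
noncomputable def yCoord (γ : SimpleClosedC1Curve 2) (s : ℝ) : ℝ := γ.curve s 1

/-- Reparametrized x: f(θ) = x(Lθ/(2π)). -/
noncomputable def fParm (γ : SimpleClosedC1Curve 2) (θ : ℝ) : ℝ :=
  xCoord γ (γ.length * θ / (2 * Real.pi))

/-- Reparametrized y: g(θ) = y(Lθ/(2π)). -/
noncomputable def gParm (γ : SimpleClosedC1Curve 2) (θ : ℝ) : ℝ :=
  yCoord γ (γ.length * θ / (2 * Real.pi))

/-- Unit-speed (arc-length parametrization). -/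
def IsArcLengthParametrized {n : ℕ} (γ : SimpleClosedC1Curve n) : Prop :=
  ∀ t : ℝ, ‖deriv γ.curve t‖ = 1

/-- Enclosed (signed) area via the shoelace formula. -/
noncomputable def area (γ : SimpleClosedC1Curve 2) (a b : ℝ) : ℝ :=
  (1/2) * ∫ t in a..b,
    (γ.curve t 0 * deriv γ.curve t 1 - γ.curve t 1 * deriv γ.curve t 0)

/-! Rescaling time by `L / (2π)`, integration by parts turns the shoelace area into `∫ f g'`
over `[0, 2π]`, where `f, g` are the rescaled coordinates. By AM–GM `f g' ≤ (f² + g'²) / 2`; the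
Fourier data give Wirtinger's inequality `∫ f² ≤ ∫ f'²` termwise, since `n² ≥ 1`; and unit speed
gives `f'² + g'² = (L / 2π)²`. Hence the area is at most `π (L / 2π)² = L² / 4π`. -/

open Real intervalIntegral

theorem tsum_le_tsum_sq_mul {u : ℕ+ → ℝ} (hu : ∀ n, 0 ≤ u n)
    (h : Summable fun n : ℕ+ => (n : ℝ) ^ 2 * u n) :
    ∑' n, u n ≤ ∑' n : ℕ+, (n : ℝ) ^ 2 * u n := by
  have hle : ∀ n : ℕ+, u n ≤ (n : ℝ) ^ 2 * u n := fun n =>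
    le_mul_of_one_le_left (hu n) (one_le_pow₀ (Nat.one_le_cast.2 n.pos))
  exact Summable.tsum_le_tsum hle (h.of_nonneg_of_le hu hle) h

theorem integral_mul_deriv_sub_mul_deriv_eq {x y x' y' : ℝ → ℝ} {a b : ℝ}
    (hx : ∀ t, HasDerivAt x (x' t) t) (hy : ∀ t, HasDerivAt y (y' t) t)
    (hx' : Continuous x') (hy' : Continuous y') (hxab : x a = x b) (hyab : y a = y b) :
    ∫ t in a..b, (x t * y' t - y t * x' t) = 2 * ∫ t in a..b, x t * y' t := by
  have hcx : Continuous x := continuous_iff_continuousAt.2 fun t => (hx t).continuousAt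
  have hcy : Continuous y := continuous_iff_continuousAt.2 fun t => (hy t).continuousAt
  have hparts : ∫ t in a..b, (x' t * y t + x t * y' t) = 0 := by
    rw [integral_deriv_mul_eq_sub_of_hasDerivAt hcx.continuousOn hcy.continuousOn
      (fun t _ => hx t) (fun t _ => hy t) (hx'.intervalIntegrable _ _)
      (hy'.intervalIntegrable _ _), hxab, hyab, sub_self]
  calc ∫ t in a..b, (x t * y' t - y t * x' t)
      = ∫ t in a..b, (2 * (x t * y' t) - (x' t * y t + x t * y' t)) :=
        integral_congr fun t _ => by ring
    _ = 2 * ∫ t in a..b, x t * y' t := by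
        rw [integral_sub, integral_const_mul, hparts, sub_zero] <;>
          exact Continuous.intervalIntegrable (by fun_prop) _ _

theorem integral_mul_le_of_integral_sq_le {f p q : ℝ → ℝ} {a b c : ℝ} (hab : a ≤ b)
    (hf : Continuous f) (hp : Continuous p) (hq : Continuous q)
    (hfp : ∫ t in a..b, f t ^ 2 ≤ ∫ t in a..b, p t ^ 2)
    (hpq : ∀ t ∈ Set.uIcc a b, p t ^ 2 + q t ^ 2 = c ^ 2) :
    ∫ t in a..b, f t * q t ≤ (b - a) * c ^ 2 / 2 := by
  have hint : ∀ g : ℝ → ℝ, Continuous g → IntervalIntegrable g MeasureTheory.volume a b :=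
    fun g hg => hg.intervalIntegrable a b
  calc ∫ t in a..b, f t * q t ≤ ∫ t in a..b, (f t ^ 2 + q t ^ 2) / 2 :=
        integral_mono_on hab (hint _ (by fun_prop)) (hint _ (by fun_prop))
          fun t _ => by nlinarith [sq_nonneg (f t - q t)]
    _ = ((∫ t in a..b, f t ^ 2) + ∫ t in a..b, q t ^ 2) / 2 := by
        rw [integral_div, integral_add (hint _ (by fun_prop)) (hint _ (by fun_prop))]
    _ ≤ ((∫ t in a..b, p t ^ 2) + ∫ t in a..b, q t ^ 2) / 2 := by gcongr
    _ = ∫ t in a..b, (p t ^ 2 + q t ^ 2) / 2 := by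
        rw [integral_div, integral_add (hint _ (by fun_prop)) (hint _ (by fun_prop))]
    _ = (b - a) * c ^ 2 / 2 := by
        rw [integral_congr fun t ht => by rw [hpq t ht], integral_const, smul_eq_mul,
          mul_div_assoc]

namespace SimpleClosedC1Curve

section

variable {n : ℕ} (γ : SimpleClosedC1Curve n)

theorem hasDerivAt_deriv (t : ℝ) : HasDerivAt γ.curve (deriv γ.curve t) t :=
  let ⟨_, h⟩ := γ.has_deriv t
  h.differentiableAt.hasDerivAt

theorem hasDerivAt_apply (i : Fin n) (t : ℝ) :
    HasDerivAt (fun s => γ.curve s i) (deriv γ.curve t i) t :=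
  (PiLp.hasFDerivAt_apply 2 (γ.curve t) i).comp_hasDerivAt t (γ.hasDerivAt_deriv t)

theorem deriv_apply_comp_mul (k : ℝ) (i : Fin n) :
    deriv (fun θ => γ.curve (k * θ) i) = fun θ => k * deriv γ.curve (k * θ) i :=
  funext fun θ => by
    rw [deriv_comp_mul_left k (fun s => γ.curve s i) θ, (γ.hasDerivAt_apply i _).deriv,
      smul_eq_mul]

theorem continuous_apply_comp_mul (k : ℝ) (i : Fin n) :
    Continuous fun θ => γ.curve (k * θ) i :=
  (PiLp.continuous_apply 2 _ i).comp (γ.continuous.comp (continuous_const_mul k))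

theorem continuous_deriv_apply_comp_mul (hdc : Continuous (deriv γ.curve)) (k : ℝ) (i : Fin n) :
    Continuous (deriv fun θ => γ.curve (k * θ) i) := by
  rw [γ.deriv_apply_comp_mul]
  exact continuous_const.mul
    ((PiLp.continuous_apply 2 _ i).comp (hdc.comp (continuous_const_mul k)))

theorem sum_deriv_apply_sq (h_arc : IsArcLengthParametrized γ) (t : ℝ) :
    ∑ i, deriv γ.curve t i ^ 2 = 1 := by
  rw [← EuclideanSpace.real_norm_sq_eq, h_arc t, one_pow]

end

variable (γ : SimpleClosedC1Curve 2)

theorem area_eq_integral_mul_deriv (hdc : Continuous (deriv γ.curve)) :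
    area γ 0 γ.length = ∫ t in 0..γ.length, γ.curve t 0 * deriv γ.curve t 1 := by
  rw [area, integral_mul_deriv_sub_mul_deriv_eq (γ.hasDerivAt_apply 0) (γ.hasDerivAt_apply 1)
    (by fun_prop) (by fun_prop) (by rw [γ.closed]) (by rw [γ.closed])]
  ring

theorem fParm_eq : fParm γ = fun θ => γ.curve (γ.length / (2 * π) * θ) 0 :=
  funext fun θ => by rw [fParm, xCoord, mul_div_right_comm]

theorem gParm_eq : gParm γ = fun θ => γ.curve (γ.length / (2 * π) * θ) 1 :=
  funext fun θ => by rw [gParm, yCoord, mul_div_right_comm]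

theorem area_eq_integral_fParm_mul_deriv_gParm (hdc : Continuous (deriv γ.curve)) :
    area γ 0 γ.length = ∫ θ in 0..2 * π, fParm γ θ * deriv (gParm γ) θ := by
  set c := γ.length / (2 * π)
  have hc : c * (2 * π) = γ.length := div_mul_cancel₀ _ (by positivity)
  have hsub := mul_integral_comp_mul_left (a := 0) (b := 2 * π) (c := c)
    (f := fun t => γ.curve t 0 * deriv γ.curve t 1)
  rw [mul_zero, hc] at hsub
  rw [γ.area_eq_integral_mul_deriv hdc, ← hsub, ← integral_const_mul, fParm_eq, gParm_eq,
    deriv_apply_comp_mul]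
  exact integral_congr fun θ _ => by ring

theorem deriv_fParm_sq_add_deriv_gParm_sq (h_arc : IsArcLengthParametrized γ) (θ : ℝ) :
    deriv (fParm γ) θ ^ 2 + deriv (gParm γ) θ ^ 2 = (γ.length / (2 * π)) ^ 2 := by
  rw [fParm_eq, gParm_eq, deriv_apply_comp_mul, deriv_apply_comp_mul, mul_pow, mul_pow, ← mul_add,
    ← Fin.sum_univ_two (fun i => deriv γ.curve _ i ^ 2), γ.sum_deriv_apply_sq h_arc, mul_one]

end SimpleClosedC1Curve

theorem isoperimetric_inequality (γ : SimpleClosedC1Curve 2)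
    (hdc : Continuous (deriv γ.curve))
    (h_arc : IsArcLengthParametrized γ)
    (a b : ℕ → ℝ)
    (h_parseval : ∫ θ in (0:ℝ)..(2*Real.pi), (fParm γ θ)^2 =
        Real.pi * ∑' n : ℕ+, ((a n)^2 + (b n)^2))
    (h_wirtinger : ∫ θ in (0:ℝ)..(2*Real.pi), (deriv (fParm γ) θ)^2 =
        Real.pi * ∑' n : ℕ+, ((n : ℝ)^2 * ((a n)^2 + (b n)^2)))
    (hsum : Summable (fun n : ℕ+ => (n : ℝ)^2 * ((a n)^2 + (b n)^2))) :
    area γ 0 γ.length ≤ γ.length^2 / (4 * Real.pi) := by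
  have hwirtinger :
      ∫ θ in 0..2 * π, fParm γ θ ^ 2 ≤ ∫ θ in 0..2 * π, deriv (fParm γ) θ ^ 2 := by
    rw [h_parseval, h_wirtinger]
    exact mul_le_mul_of_nonneg_left (tsum_le_tsum_sq_mul (fun n => by positivity) hsum) pi_pos.le
  calc area γ 0 γ.length = ∫ θ in 0..2 * π, fParm γ θ * deriv (gParm γ) θ :=
        γ.area_eq_integral_fParm_mul_deriv_gParm hdc
    _ ≤ (2 * π - 0) * (γ.length / (2 * π)) ^ 2 / 2 :=
        integral_mul_le_of_integral_sq_le (by positivity)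
          (γ.fParm_eq ▸ γ.continuous_apply_comp_mul _ 0)
          (γ.fParm_eq ▸ γ.continuous_deriv_apply_comp_mul hdc _ 0)
          (γ.gParm_eq ▸ γ.continuous_deriv_apply_comp_mul hdc _ 1) hwirtinger
          fun θ _ => γ.deriv_fParm_sq_add_deriv_gParm_sq h_arc θ
    _ = γ.length ^ 2 / (4 * π) := by field_simp; ring
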